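/- Let f : [1,∞) → ℝ be non-negative, non-decreasing and right-continuous, and let F(x) = Σ_{n ≤ x} f(x/n). If there exist real constants A, B such that F(x) = A·x·log x + B·x + o(x) as x → ∞, then the Lebesgue–Stieltjes integral ∫_{[1,x]} (1/t) dμ_f(t), where μ_f is the Lebesgue–Stieltjes measure associated to f (extended by f(1) on [0,1)), satisfies ∫_{[1,x]} (1/t) dμ_f(t) = A·log x + O(1) as x → ∞. -/

import Mathlib

/-!
The alternating sum `F(x) - 2 F(x/2) = ∑_{n ≤ x} (-1)^(n+1) f(x/n)` has non-negative,
non-increasing terms, so it is at least `f(x) - f(x/2)`; by hypothesis it is `O(x)`, and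
iterating `f(x) ≤ f(x/2) + O(x)` gives the Chebyshev bound `f(x) = O(x)`.

On the other hand `⌊x/t⌋ = #{n ≤ x : t ≤ x/n}` for `t ≥ 1`, so
`∫_{[1,x]} ⌊x/t⌋ dμ_f = ∑_{n ≤ x} μ_f[1, x/n] = F(x) - ⌊x⌋ f(1)`, and replacing `⌊x/t⌋` by
`x/t` changes the integral by at most `μ_f[1, x] = f(x) - f(1) = O(x)`. Hence
`x ∫_{[1,x]} dμ_f(t)/t = A x log x + O(x)`.
-/

open Filter Real Finset MeasureTheory Asymptotics

theorem sum_range_succ_neg_one_pow_mul (b : ℕ → ℝ) (N : ℕ) :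
    ∑ i ∈ range (N + 1), (-1) ^ i * b i = b 0 - ∑ i ∈ range N, (-1) ^ i * b (i + 1) := by
  simp only [sum_range_succ', pow_succ, mul_neg_one, neg_mul, sum_neg_distrib]
  ring

theorem Antitone.sum_range_neg_one_pow_mul_mem_Icc {b : ℕ → ℝ} (hb : Antitone b)
    (h0 : ∀ n, 0 ≤ b n) (N : ℕ) : ∑ i ∈ range N, (-1) ^ i * b i ∈ Set.Icc 0 (b 0) := by
  induction N generalizing b with
  | zero => simpa using h0 0
  | succ N ih =>
    obtain ⟨hlo, hhi⟩ := ih (hb.comp_monotone fun _ _ h => Nat.add_le_add_right h 1)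
      fun n => h0 (n + 1)
    simp only [Function.comp_apply, zero_add] at hlo hhi
    have h10 : b 1 ≤ b 0 := hb zero_le_one
    rw [sum_range_succ_neg_one_pow_mul]
    constructor <;> linarith

theorem Antitone.sub_le_sum_range_succ_neg_one_pow_mul {b : ℕ → ℝ} (hb : Antitone b)
    (h0 : ∀ n, 0 ≤ b n) (N : ℕ) : b 0 - b 1 ≤ ∑ i ∈ range (N + 1), (-1) ^ i * b i := by
  have hshift : Antitone fun n => b (n + 1) :=
    hb.comp_monotone fun _ _ h => Nat.add_le_add_right h 1
  have := (hshift.sum_range_neg_one_pow_mul_mem_Icc (fun n => h0 (n + 1)) N).2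
  rw [sum_range_succ_neg_one_pow_mul]
  linarith

noncomputable def moebiusTransform (f : ℝ → ℝ) (x : ℝ) : ℝ :=
  ∑ n ∈ Icc 1 ⌊x⌋₊, f (x / n)

theorem moebiusTransform_half (f : ℝ → ℝ) (x : ℝ) :
    moebiusTransform f (x / 2) = ∑ n ∈ Icc 1 ⌊x⌋₊ with Even n, f (x / n) := by
  have himage : {n ∈ Icc 1 ⌊x⌋₊ | Even n} = (Icc 1 (⌊x⌋₊ / 2)).image (2 * ·) := by
    ext n
    simp only [mem_filter, mem_Icc, mem_image, even_iff_two_dvd]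
    constructor
    · rintro ⟨⟨h1, h2⟩, m, rfl⟩; exact ⟨m, by omega, rfl⟩
    · rintro ⟨m, hm, rfl⟩; exact ⟨by omega, m, rfl⟩
  rw [himage, sum_image fun _ _ _ _ h => by simpa using h, moebiusTransform,
    Nat.floor_div_ofNat]
  refine sum_congr rfl fun m _ => ?_
  rw [div_div, Nat.cast_mul, Nat.cast_ofNat]

theorem moebiusTransform_sub_two_mul_half (f : ℝ → ℝ) (x : ℝ) :
    moebiusTransform f x - 2 * moebiusTransform f (x / 2) =
      ∑ i ∈ range ⌊x⌋₊, (-1) ^ i * f (x / (i + 1)) := by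
  rw [moebiusTransform_half, sum_filter, moebiusTransform, mul_sum, ← sum_sub_distrib,
    ← Ico_add_one_right_eq_Icc, sum_Ico_eq_sum_range, Nat.add_sub_cancel]
  refine sum_congr rfl fun i _ => ?_
  rw [add_comm 1 i, Nat.cast_add_one]
  rcases Nat.even_or_odd i with hi | hi
  · rw [if_neg (Nat.not_even_iff_odd.2 hi.add_one), hi.neg_one_pow]
    ring
  · rw [if_pos hi.add_one, hi.neg_one_pow]
    ring

theorem Monotone.sub_half_le_moebiusTransform_sub {g : ℝ → ℝ} (hg : Monotone g)
    (h0 : ∀ x, 0 ≤ g x) {x : ℝ} (hx : 1 ≤ x) :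
    g x - g (x / 2) ≤ moebiusTransform g x - 2 * moebiusTransform g (x / 2) := by
  have hb : Antitone fun i : ℕ => g (x / (i + 1)) := fun i j hij =>
    hg (div_le_div_of_nonneg_left (by linarith) (by positivity) (by gcongr))
  obtain ⟨N, hN⟩ : ∃ N, ⌊x⌋₊ = N + 1 := Nat.exists_eq_add_one.2 (Nat.one_le_floor_iff x |>.2 hx)
  have := hb.sub_le_sum_range_succ_neg_one_pow_mul (fun i => h0 _) N
  rw [moebiusTransform_sub_two_mul_half, hN]
  simpa only [Nat.cast_zero, zero_add, div_one, Nat.cast_one, one_add_one_eq_two] using this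

theorem Monotone.le_add_mul_of_sub_half_le {g : ℝ → ℝ} (hg : Monotone g) {C X : ℝ}
    (hC : 0 ≤ C) (hX : 0 < X) (h : ∀ x, X ≤ x → g x - g (x / 2) ≤ C * x) {x : ℝ}
    (hx : 0 ≤ x) : g x ≤ g X + 2 * C * x := by
  suffices ∀ n : ℕ, ∀ x, 0 ≤ x → x ≤ 2 ^ n * X → g x ≤ g X + 2 * C * x by
    obtain ⟨n, hn⟩ := pow_unbounded_of_one_lt (x / X) one_lt_two
    exact this n x hx ((div_le_iff₀ hX).1 hn.le)
  intro n
  induction n with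
  | zero =>
    intro x hx hxX
    linarith [hg (by simpa using hxX), mul_nonneg hC hx]
  | succ n ih =>
    intro x hx hxX
    rcases le_or_gt x X with hxX' | hXx
    · linarith [hg hxX', mul_nonneg hC hx]
    · have := ih (x / 2) (by positivity) (by rw [pow_succ] at hxX; linarith)
      have := h x hXx.le
      linarith

theorem Monotone.isBigO_of_sub_half_le {g : ℝ → ℝ} (hg : Monotone g) {C : ℝ}
    (h : ∀ᶠ x in atTop, g x - g (x / 2) ≤ C * x) : g =O[atTop] fun x => x := by
  obtain ⟨X, hX⟩ := eventually_atTop.1 (h.and (eventually_ge_atTop 1))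
  have hX1 : 1 ≤ X := (hX X le_rfl).2
  have hbound (x : ℝ) (hx : 0 ≤ x) : g x ≤ g X + 2 * |C| * x :=
    hg.le_add_mul_of_sub_half_le (abs_nonneg C) (by linarith) (fun y hy =>
      (hX y hy).1.trans (mul_le_mul_of_nonneg_right (le_abs_self C) (by linarith))) hx
  refine IsBigO.of_bound (|g 0| + |g X| + 2 * |C|) ?_
  filter_upwards [eventually_ge_atTop X] with x hx
  have hx1 : 1 ≤ x := by linarith
  have hx0 : 0 ≤ x := by linarith
  have hlow := hg hx0
  have hup := hbound x hx0
  have h0x := le_mul_of_one_le_right (abs_nonneg (g 0)) hx1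
  have hXx := le_mul_of_one_le_right (abs_nonneg (g X)) hx1
  have hCx := mul_nonneg (abs_nonneg C) hx0
  rw [norm_of_nonneg hx0, Real.norm_eq_abs, abs_le]
  constructor <;> linarith [neg_abs_le (g 0), le_abs_self (g X), abs_nonneg (g 0), abs_nonneg (g X)]

theorem isBigO_moebiusTransform_sub_two_mul_half {f : ℝ → ℝ} {A : ℝ}
    (hF : (fun x => moebiusTransform f x - A * x * log x) =O[atTop] fun x => x) :
    (fun x => moebiusTransform f x - 2 * moebiusTransform f (x / 2)) =O[atTop] fun x => x := by
  have hhalf : (fun x => moebiusTransform f (x / 2) - A * (x / 2) * log (x / 2))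
      =O[atTop] fun x => x :=
    (hF.comp_tendsto (tendsto_id.atTop_div_const two_pos)).trans
      (isBigO_of_le _ fun x => by simp)
  refine ((hF.sub (hhalf.const_mul_left 2)).add
    ((isBigO_refl (fun x : ℝ => x) atTop).const_mul_left (A * log 2))).congr' ?_ .rfl
  filter_upwards [eventually_gt_atTop 0] with x hx
  rw [log_div hx.ne' two_ne_zero]
  ring

theorem Monotone.isBigO_of_moebiusTransform {g : ℝ → ℝ} (hg : Monotone g) (h0 : ∀ x, 0 ≤ g x)
    {A : ℝ} (hF : (fun x => moebiusTransform g x - A * x * log x) =O[atTop] fun x => x) :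
    g =O[atTop] fun x => x := by
  obtain ⟨C, hC⟩ := (isBigO_moebiusTransform_sub_two_mul_half hF).bound
  refine hg.isBigO_of_sub_half_le (C := C) ?_
  filter_upwards [hC, eventually_ge_atTop 1] with x hCx hx
  calc g x - g (x / 2) ≤ moebiusTransform g x - 2 * moebiusTransform g (x / 2) :=
        hg.sub_half_le_moebiusTransform_sub h0 hx
    _ ≤ C * ‖x‖ := (le_norm_self _).trans hCx
    _ = C * x := by rw [norm_of_nonneg (by linarith)]

theorem natCast_le_of_mem_Icc_floor {x : ℝ} {n : ℕ} (hn : n ∈ Icc 1 ⌊x⌋₊) : (n : ℝ) ≤ x :=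
  (Nat.le_floor_iff' (by have := (mem_Icc.1 hn).1; omega)).1 (mem_Icc.1 hn).2

theorem one_le_div_of_mem_Icc_floor {x : ℝ} {n : ℕ} (hn : n ∈ Icc 1 ⌊x⌋₊) : 1 ≤ x / n :=
  (one_le_div (by exact_mod_cast (mem_Icc.1 hn).1)).2 (natCast_le_of_mem_Icc_floor hn)

theorem natFloor_div_eq_sum_indicator (x : ℝ) {t : ℝ} (ht : 1 ≤ t) :
    (⌊x / t⌋₊ : ℝ) = ∑ n ∈ Icc 1 ⌊x⌋₊, (Set.Icc 1 (x / n)).indicator 1 t := by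
  have hfilter : (Icc 1 ⌊x⌋₊).filter (fun n : ℕ => t ∈ Set.Icc 1 (x / n)) = Icc 1 ⌊x / t⌋₊ := by
    ext n
    simp only [mem_filter, mem_Icc, Set.mem_Icc, ht, true_and, and_assoc]
    refine and_congr_right fun hn => ?_
    have hn0 : (0 : ℝ) < n := by exact_mod_cast hn
    rw [le_div_iff₀ hn0, Nat.le_floor_iff' (by omega), Nat.le_floor_iff' (by omega),
      le_div_iff₀ (by linarith), mul_comm t]
    exact ⟨And.right, fun h => ⟨by nlinarith, h⟩⟩
  simp only [Set.indicator_apply, Pi.one_apply, sum_boole, hfilter, Nat.card_Icc,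
    Nat.add_sub_cancel]

theorem setIntegral_natFloor_div (μ : Measure ℝ) [IsFiniteMeasureOnCompacts μ] (x : ℝ) :
    ∫ t in Set.Icc 1 x, (⌊x / t⌋₊ : ℝ) ∂μ = ∑ n ∈ Icc 1 ⌊x⌋₊, μ.real (Set.Icc 1 (x / n)) := by
  have : IsFiniteMeasure (μ.restrict (Set.Icc 1 x)) :=
    isFiniteMeasure_restrict.2 isCompact_Icc.measure_lt_top.ne
  rw [setIntegral_congr_fun measurableSet_Icc fun t ht => natFloor_div_eq_sum_indicator x ht.1,
    integral_finsetSum _ fun n _ => (integrable_const 1).indicator measurableSet_Icc]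
  refine sum_congr rfl fun n hn => ?_
  have hn1 : (1 : ℝ) ≤ n := by exact_mod_cast (mem_Icc.1 hn).1
  have hx0 : 0 ≤ x := zero_le_one.trans (hn1.trans (natCast_le_of_mem_Icc_floor hn))
  rw [integral_indicator_one measurableSet_Icc, measureReal_restrict_apply measurableSet_Icc,
    Set.inter_eq_left.2 (Set.Icc_subset_Icc_right (div_le_self hx0 hn1))]

theorem abs_mul_setIntegral_inv_sub_sum_le (μ : Measure ℝ) [IsFiniteMeasureOnCompacts μ]
    {x : ℝ} (hx : 0 ≤ x) :
    |x * ∫ t in Set.Icc 1 x, 1 / t ∂μ - ∑ n ∈ Icc 1 ⌊x⌋₊, μ.real (Set.Icc 1 (x / n))| ≤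
      μ.real (Set.Icc 1 x) := by
  have hfin : μ (Set.Icc 1 x) < ⊤ := isCompact_Icc.measure_lt_top
  have hinv : IntegrableOn (fun t : ℝ => x * (1 / t)) (Set.Icc 1 x) μ :=
    ContinuousOn.integrableOn_compact isCompact_Icc (continuousOn_const.mul
      (continuousOn_const.div continuousOn_id fun t ht => by linarith [ht.1]))
  have hfloor : IntegrableOn (fun t : ℝ => (⌊x / t⌋₊ : ℝ)) (Set.Icc 1 x) μ := by
    refine Measure.integrableOn_of_bounded hfin.ne (M := x)
      (measurable_from_nat.comp (measurable_const.div measurable_id).nat_floor).aestronglyMeasurable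
      (ae_restrict_of_forall_mem measurableSet_Icc fun t ht => ?_)
    rw [Real.norm_natCast]
    exact (Nat.floor_le (div_nonneg hx (by linarith [ht.1]))).trans (div_le_self hx ht.1)
  rw [← setIntegral_natFloor_div, ← integral_const_mul, ← integral_sub hinv hfloor,
    ← Real.norm_eq_abs]
  refine (norm_setIntegral_le_of_norm_le_const hfin fun t ht => ?_).trans_eq (one_mul _)
  have ht0 : 0 ≤ x / t := div_nonneg hx (by linarith [ht.1])
  rw [Real.norm_eq_abs, abs_le, mul_one_div]
  constructor <;> linarith [Nat.floor_le ht0, Nat.lt_floor_add_one (x / t)]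

theorem StieltjesFunction.measureReal_Icc_of_forall_le_eq (σ : StieltjesFunction ℝ) {a b : ℝ}
    (hσ : ∀ x ≤ a, σ x = σ a) (hab : a ≤ b) : σ.measure.real (Set.Icc a b) = σ b - σ a := by
  have hleft : Function.leftLim σ a = σ a := leftLim_eq_of_tendsto <|
    tendsto_const_nhds.congr' <| eventually_nhdsWithin_of_forall fun x hx => (hσ x hx.le).symm
  rw [measureReal_def, σ.measure_Icc, hleft, ENNReal.toReal_ofReal (sub_nonneg.2 (σ.mono hab))]

theorem StieltjesFunction.sum_measureReal_Icc_one_div (σ : StieltjesFunction ℝ)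
    (hσ : ∀ x ≤ 1, σ x = σ 1) (x : ℝ) :
    ∑ n ∈ Icc 1 ⌊x⌋₊, σ.measure.real (Set.Icc 1 (x / n)) =
      moebiusTransform σ x - ⌊x⌋₊ * σ 1 := by
  rw [sum_congr rfl fun n hn => σ.measureReal_Icc_of_forall_le_eq hσ
      (one_le_div_of_mem_Icc_floor hn), sum_sub_distrib, sum_const, Nat.card_Icc,
    Nat.add_sub_cancel, nsmul_eq_mul, moebiusTransform]

theorem StieltjesFunction.isBigO_setIntegral_inv_sub_log (σ : StieltjesFunction ℝ)
    (hσ : ∀ x ≤ 1, σ x = σ 1) (h0 : ∀ x, 0 ≤ σ x) {A : ℝ}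
    (hF : (fun x => moebiusTransform σ x - A * x * log x) =O[atTop] fun x => x) :
    (fun x => (∫ t in Set.Icc 1 x, 1 / t ∂σ.measure) - A * log x) =O[atTop] fun _ => (1 : ℝ) := by
  have hσO : (fun x => σ x - σ 1) =O[atTop] fun x => x :=
    (σ.mono.isBigO_of_moebiusTransform h0 hF).sub (isLittleO_const_id_atTop _).isBigO
  have herr : (fun x => x * (∫ t in Set.Icc 1 x, 1 / t ∂σ.measure) -
      ∑ n ∈ Icc 1 ⌊x⌋₊, σ.measure.real (Set.Icc 1 (x / n))) =O[atTop] fun x => x := by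
    refine IsBigO.trans (IsBigO.of_bound 1 ?_) hσO
    filter_upwards [eventually_ge_atTop 1] with x hx
    rw [one_mul, Real.norm_eq_abs, Real.norm_eq_abs, abs_of_nonneg (sub_nonneg.2 (σ.mono hx)),
      ← σ.measureReal_Icc_of_forall_le_eq hσ hx]
    exact abs_mul_setIntegral_inv_sub_sum_le _ (by linarith)
  have hfloor : (fun x : ℝ => (⌊x⌋₊ : ℝ)) =O[atTop] fun x => x := by
    refine IsBigO.of_bound 1 ?_
    filter_upwards [eventually_ge_atTop 0] with x hx
    rw [one_mul, Real.norm_natCast, Real.norm_of_nonneg hx]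
    exact Nat.floor_le hx
  have hmain : (fun x => x * ((∫ t in Set.Icc 1 x, 1 / t ∂σ.measure) - A * log x))
      =O[atTop] fun x => x := by
    refine ((herr.add hF).sub (hfloor.const_mul_left (σ 1))).congr_left fun x => ?_
    rw [σ.sum_measureReal_Icc_one_div hσ]
    ring
  refine ((isBigO_mul_iff_isBigO_div (eventually_ne_atTop 0)).1 hmain).congr' .rfl ?_
  filter_upwards [eventually_ne_atTop 0] with x hx using div_self hx

theorem moebius_transform_estimate_stieltjes_general
    (f : ℝ → ℝ) (A B : ℝ) (σ : StieltjesFunction ℝ)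
    (hnonneg : ∀ x, 1 ≤ x → 0 ≤ f x)
    (hσ : ∀ x : ℝ, σ x = f (max x 1))
    (hF : (fun x : ℝ =>
        (∑ n ∈ Finset.Icc 1 ⌊x⌋₊, f (x / n)) - (A * x * Real.log x + B * x))
      =o[atTop] fun x : ℝ => x) :
    (fun x : ℝ => (∫ t in Set.Icc 1 x, (1 / t) ∂σ.measure) - A * Real.log x)
      =O[atTop] fun _ : ℝ => (1 : ℝ) := by
  have hσf (x : ℝ) (hx : 1 ≤ x) : σ x = f x := by rw [hσ, max_eq_left hx]
  have hσ1 (x : ℝ) (hx : x ≤ 1) : σ x = σ 1 := by rw [hσ, hσ, max_eq_right hx, max_self]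
  have hmoebius (x : ℝ) : moebiusTransform σ x = ∑ n ∈ Icc 1 ⌊x⌋₊, f (x / n) :=
    sum_congr rfl fun n hn => hσf _ (one_le_div_of_mem_Icc_floor hn)
  refine σ.isBigO_setIntegral_inv_sub_log hσ1 (fun x => hσ x ▸ hnonneg _ (le_max_right x 1)) ?_
  refine (hF.isBigO.add ((isBigO_refl (fun x : ℝ => x) atTop).const_mul_left B)).congr_left
    fun x => ?_
  rw [hmoebius]
  ring

/-- Mertens-type estimate for the Lebesgue–Stieltjes integral `∫_{[1,x]} dμ_f(t)/t`,
where `μ_f` is the Lebesgue–Stieltjes measure of the non-decreasing right-continuous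
function `f` on `[1,∞)`, extended by the constant value `f 1` to the left of `1`. -/
theorem moebius_transform_estimate_stieltjes
    (f : ℝ → ℝ) (A B : ℝ) (σ : StieltjesFunction ℝ)
    (hnonneg : ∀ x, 1 ≤ x → 0 ≤ f x)
    (hmono : ∀ x y, 1 ≤ x → x ≤ y → f x ≤ f y)
    (hσ : ∀ x : ℝ, σ x = f (max x 1))
    (hF : (fun x : ℝ =>
        (∑ n ∈ Finset.Icc 1 ⌊x⌋₊, f (x / n)) - (A * x * Real.log x + B * x))
      =o[atTop] fun x : ℝ => x) :
    (fun x : ℝ => (∫ t in Set.Icc 1 x, (1 / t) ∂σ.measure) - A * Real.log x)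
      =O[atTop] fun _ : ℝ => (1 : ℝ) :=
  moebius_transform_estimate_stieltjes_general f A B σ hnonneg hσ hF
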